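/- arXiv:2102.08358 — 6 statements merged into one kernel-verified Lean document; each statement's English description precedes it below -/
import Mathlib

section
/- In the ELF mechanism, if forecaster i's accuracy exceeds forecaster j's by more than ε, then E[F_i] - E[F_j] > mε/(n-1), where F_i is i's total number of points. -/
noncomputable def quadScore (q y : ℝ) : ℝ := 1 - (y - q)^2

/-- The ELF per-event point probability for forecaster i given outcome y. -/
noncomputable def elfProb (n m : ℕ) (r : Fin n → Fin m → ℝ) (i : Fin n)
    (t : Fin m) (y : ℝ) : ℝ :=
  (1 / (n:ℝ)) * (1 + quadScore (r i t) y
    - (1 / ((n:ℝ) - 1)) * ∑ j ∈ Finset.univ.erase i, quadScore (r j t) y)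

/-- Expected total points of forecaster i in ELF, with y_t ~ Bernoulli(θ_t) independent. -/
noncomputable def elfExpPoints (n m : ℕ) (θ : Fin m → ℝ) (r : Fin n → Fin m → ℝ)
    (i : Fin n) : ℝ :=
  ∑ t, (θ t * elfProb n m r i t 1 + (1 - θ t) * elfProb n m r i t 0)

/-- If forecaster i's accuracy exceeds forecaster j's by more than ε, then in ELF,
E[F_i] - E[F_j] > mε/(n-1). -/
theorem elf_expected_points_gap (n m : ℕ) (hn : 2 ≤ n) (hm : 0 < m)
    (θ : Fin m → ℝ) (hθ : ∀ t, θ t ∈ Set.Icc (0:ℝ) 1)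
    (r : Fin n → Fin m → ℝ) (hr : ∀ i t, r i t ∈ Set.Icc (0:ℝ) 1)
    (ε : ℝ) (hε : 0 < ε) (i j : Fin n)
    (hacc : 1 - (1 / (m:ℝ)) * ∑ t, (r i t - θ t)^2
            > (1 - (1 / (m:ℝ)) * ∑ t, (r j t - θ t)^2) + ε) :
    elfExpPoints n m θ r i - elfExpPoints n m θ r j > (m:ℝ) * ε / ((n:ℝ) - 1) := by
  have h2 : (2:ℝ) ≤ (n:ℝ) := by exact_mod_cast hn
  have hnpos : (0:ℝ) < (n:ℝ) - 1 := by linarith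
  have hnne : ((n:ℝ)) ≠ 0 := by linarith
  have hnne1 : ((n:ℝ) - 1) ≠ 0 := ne_of_gt hnpos
  have hmpos : (0:ℝ) < (m:ℝ) := by exact_mod_cast hm
  have hdiff : ∀ (t : Fin m) (y : ℝ), elfProb n m r i t y - elfProb n m r j t y
      = (quadScore (r i t) y - quadScore (r j t) y) / ((n:ℝ) - 1) := by
    intro t y
    unfold elfProb
    rw [Finset.sum_erase_eq_sub (Finset.mem_univ i),
      Finset.sum_erase_eq_sub (Finset.mem_univ j)]
    field_simp
    ring
  have key : elfExpPoints n m θ r i - elfExpPoints n m θ r j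
      = (∑ t, ((r j t - θ t)^2 - (r i t - θ t)^2)) / ((n:ℝ) - 1) := by
    unfold elfExpPoints
    rw [← Finset.sum_sub_distrib, Finset.sum_div]
    apply Finset.sum_congr rfl
    intro t _
    have h1 := hdiff t 1
    have h0 := hdiff t 0
    unfold quadScore at h1 h0
    field_simp at h1 h0 ⊢
    linear_combination (θ t) * h1 + (1 - θ t) * h0
  rw [key, gt_iff_lt, div_lt_div_iff_of_pos_right hnpos]
  rw [Finset.sum_sub_distrib]
  have h' : ε < (1/(m:ℝ)) * (∑ t, (r j t - θ t)^2) - (1/(m:ℝ)) * (∑ t, (r i t - θ t)^2) := by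
    linarith
  have h'' := mul_lt_mul_of_pos_left h' hmpos
  rw [mul_sub] at h''
  have e1 : (m:ℝ) * ((1/(m:ℝ)) * ∑ t, (r j t - θ t)^2) = ∑ t, (r j t - θ t)^2 := by
    field_simp
  have e2 : (m:ℝ) * ((1/(m:ℝ)) * ∑ t, (r i t - θ t)^2) = ∑ t, (r i t - θ t)^2 := by
    field_simp
  linarith
end

section
/- The Simple Max mechanism selects an ε-optimal forecaster with probability at least 1-δ whenever m ≥ 2·log(n/δ)/ε², given truthful reports. -/
lemma bern_mgf (θ : ℝ) (h0 : 0 ≤ θ) (h1 : θ ≤ 1) (x : ℝ) :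
    1 - θ + θ * Real.exp x ≤ Real.exp (θ * x + x^2/8) := by
  set D : ℝ → ℝ := fun x => 1 - θ + θ * Real.exp x with hD
  have hDpos : ∀ y, 0 < D y := by
    intro y
    rcases eq_or_lt_of_le h0 with h|h
    · simp [hD, ← h]
    · have := Real.exp_pos y
      have : 0 < θ * Real.exp y := by positivity
      simp only [hD]; nlinarith
  set h : ℝ → ℝ := fun x => θ * x + x^2/8 - Real.log (D x) with hh
  set h' : ℝ → ℝ := fun x => θ + x/4 - θ * Real.exp x / D x with hh'
  have hd1 : ∀ y, HasDerivAt h (h' y) y := by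
    intro y
    have hexp : HasDerivAt (fun x => θ * Real.exp x) (θ * Real.exp y) y :=
      (Real.hasDerivAt_exp y).const_mul θ
    have hDd : HasDerivAt D (θ * Real.exp y) y := by
      exact hexp.const_add (1 - θ)
    have hlog : HasDerivAt (fun x => Real.log (D x)) (θ * Real.exp y / D y) y :=
      (hDd.log (hDpos y).ne')
    have hpoly : HasDerivAt (fun x : ℝ => θ * x + x^2/8) (θ + y * 2 / 8) y := by
      have := ((hasDerivAt_id y).const_mul θ).add
        (((hasDerivAt_pow 2 y)).div_const 8)
      exact this.congr_deriv (by push_cast; ring)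
    have := hpoly.sub hlog
    refine this.congr_deriv ?_
    simp only [hh']
    ring
  have hd2 : ∀ y, HasDerivAt h' (1/4 - θ * (1-θ) * Real.exp y / (D y)^2) y := by
    intro y
    have hexp : HasDerivAt (fun x => θ * Real.exp x) (θ * Real.exp y) y :=
      (Real.hasDerivAt_exp y).const_mul θ
    have hDd : HasDerivAt D (θ * Real.exp y) y := by
      exact hexp.const_add (1 - θ)
    have hdiv : HasDerivAt (fun x => θ * Real.exp x / D x)
        ((θ * Real.exp y * D y - θ * Real.exp y * (θ * Real.exp y)) / (D y)^2) y :=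
      hexp.div hDd (hDpos y).ne'
    have hpoly : HasDerivAt (fun x : ℝ => θ + x/4) (1/4) y := by
      simpa using ((hasDerivAt_id y).div_const 4).const_add θ
    have := hpoly.sub hdiv
    refine this.congr_deriv ?_
    have : θ * Real.exp y * D y - θ * Real.exp y * (θ * Real.exp y)
        = θ * (1-θ) * Real.exp y := by
      simp only [hD]; ring
    rw [this]
  have hd2nonneg : ∀ y, 0 ≤ 1/4 - θ * (1-θ) * Real.exp y / (D y)^2 := by
    intro y
    have hDy := hDpos y
    have key : 4 * (θ * (1-θ) * Real.exp y) ≤ (D y)^2 := by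
      have : (D y)^2 - 4 * (θ * (1-θ) * Real.exp y) = ((1-θ) - θ * Real.exp y)^2 := by
        simp only [hD]; ring
      nlinarith [sq_nonneg ((1-θ) - θ * Real.exp y)]
    rw [sub_nonneg, div_le_iff₀ (by positivity : (0:ℝ) < (D y)^2)]
    generalize hA : θ * (1-θ) * Real.exp y = A at key ⊢
    generalize hB : (D y)^2 = B at key ⊢
    linarith
  -- h' is monotone
  have hmono : Monotone h' := by
    apply monotone_of_deriv_nonneg
    · exact fun y => (hd2 y).differentiableAt
    · intro y
      rw [(hd2 y).deriv]
      exact hd2nonneg y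
  have h'0 : h' 0 = 0 := by
    simp only [hh', hD]
    field_simp
    simp
  have hkey : 0 ≤ h x := by
    have hh0 : h 0 = 0 := by simp [hh, hD]
    rcases le_total 0 x with hx | hx
    · have : MonotoneOn h (Set.Ici 0) := by
        apply monotoneOn_of_deriv_nonneg (convex_Ici 0)
          (Continuous.continuousOn
            (Differentiable.continuous (fun y => (hd1 y).differentiableAt)))
        · intro y hy
          exact ((hd1 y).differentiableAt).differentiableWithinAt
        · intro y hy
          rw [(hd1 y).deriv]
          rw [← h'0]
          exact hmono (le_of_lt (by simpa using hy))
      have := this (Set.self_mem_Ici) (Set.mem_Ici.mpr hx) hx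
      linarith [hh0 ▸ this]
    · have : AntitoneOn h (Set.Iic 0) := by
        apply antitoneOn_of_deriv_nonpos (convex_Iic 0)
          (Continuous.continuousOn
            (Differentiable.continuous (fun y => (hd1 y).differentiableAt)))
        · intro y hy
          exact ((hd1 y).differentiableAt).differentiableWithinAt
        · intro y hy
          rw [(hd1 y).deriv]
          rw [← h'0]
          exact hmono (le_of_lt (by simpa using hy))
      have := this (Set.mem_Iic.mpr hx) (Set.self_mem_Iic) hx
      linarith [hh0 ▸ this]
  -- conclude
  have : Real.log (D x) ≤ θ * x + x^2/8 := by
    simp only [hh] at hkey; linarith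
  calc D x = Real.exp (Real.log (D x)) := (Real.exp_log (hDpos x)).symm
    _ ≤ Real.exp (θ * x + x^2/8) := Real.exp_le_exp.mpr this

lemma coord_mgf (θ q r lam : ℝ) (hθ0 : 0 ≤ θ) (hθ1 : θ ≤ 1)
    (hq0 : 0 ≤ q) (hq1 : q ≤ 1) (hr0 : 0 ≤ r) (hr1 : r ≤ 1) :
    (1-θ) * Real.exp (lam * (q^2 - r^2)) + θ * Real.exp (lam * ((1-q)^2 - (1-r)^2))
      ≤ Real.exp (lam * ((θ-q)^2 - (θ-r)^2) + lam^2/2) := by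
  obtain ⟨d, hd⟩ : ∃ d : ℝ, d = r - q := ⟨_, rfl⟩
  have hX1 : lam * ((1-q)^2 - (1-r)^2) = lam * (q^2 - r^2) + 2*d*lam := by
    rw [hd]; ring
  have key := bern_mgf θ hθ0 hθ1 (2*d*lam)
  have expand : (1-θ) * Real.exp (lam * (q^2-r^2)) + θ * Real.exp (lam * ((1-q)^2 - (1-r)^2))
      = Real.exp (lam * (q^2-r^2)) * (1 - θ + θ * Real.exp (2*d*lam)) := by
    rw [hX1, Real.exp_add]; ring
  rw [expand]
  have step : Real.exp (lam * (q^2-r^2)) * (1 - θ + θ * Real.exp (2*d*lam))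
      ≤ Real.exp (lam * (q^2-r^2)) * Real.exp (θ*(2*d*lam) + (2*d*lam)^2/8) := by
    apply mul_le_mul_of_nonneg_left key (Real.exp_pos _).le
  refine step.trans ?_
  rw [← Real.exp_add, Real.exp_le_exp]
  have hd2 : d^2 ≤ 1 := by rw [hd]; nlinarith
  have hμ : lam * ((θ-q)^2 - (θ-r)^2) = lam * (q^2-r^2) + θ*(2*d*lam) := by
    rw [hd]; ring
  rw [hμ]
  have : (2*d*lam)^2/8 = d^2 * lam^2 / 2 := by ring
  rw [this]
  have h3 : 0 ≤ (1 - d^2) * lam^2 := mul_nonneg (by linarith) (sq_nonneg lam)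
  nlinarith [h3]

lemma sum_biUnion_le_sum {ι α : Type*} [DecidableEq ι] [DecidableEq α] (s : Finset ι) (t : ι → Finset α)
    (f : α → ℝ) (hf : ∀ x, 0 ≤ f x) :
    ∑ x ∈ s.biUnion t, f x ≤ ∑ i ∈ s, ∑ x ∈ t i, f x := by
  induction s using Finset.cons_induction with
  | empty => simp
  | cons a s ha ih =>
    rw [Finset.cons_eq_insert, Finset.biUnion_insert, Finset.sum_insert ha]
    have := Finset.sum_union_inter (s₁ := t a) (s₂ := s.biUnion t) (f := f)
    have hnn : 0 ≤ ∑ x ∈ t a ∩ s.biUnion t, f x := Finset.sum_nonneg fun x _ => hf x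
    linarith

open Classical in
lemma sum_prod_pi_bool {m : ℕ} (g : Fin m → Bool → ℝ) :
    ∑ ω : (Fin m → Bool), ∏ t, g t (ω t) = ∏ t, (g t true + g t false) := by
  rw [← Fintype.piFinset_univ, ← Finset.prod_univ_sum]
  exact Finset.prod_congr rfl fun t _ => by simp [add_comm]

lemma arith1 (mm e A : ℝ) (hm : 0 < mm) (he : 0 < e) (hA : A < -e) :
    e * (mm * A) + mm * e^2/2 ≤ -mm * e^2/2 := by
  nlinarith [mul_le_mul_of_nonneg_left hA.le (mul_nonneg he.le hm.le)]

open Classical in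
/-- The Simple Max mechanism (pick the forecaster with largest total quadratic score,
with truthful reports) selects an ε-optimal forecaster with probability at least
1 - δ whenever m ≥ 2·log(n/δ)/ε².  Outcomes are m independent Bernoulli(θ_t) events,
whose joint distribution is made explicit as a product weight over ω : Fin m → Bool. -/
theorem simple_max_accuracy (n m : ℕ) (hn : 1 ≤ n) (hm : 0 < m)
    (ε δ : ℝ) (hε : 0 < ε) (hδ : 0 < δ) (hδ1 : δ < 1)
    (θ : Fin m → ℝ) (hθ : ∀ t, θ t ∈ Set.Icc (0:ℝ) 1)
    (p : Fin n → Fin m → ℝ) (hp : ∀ i t, p i t ∈ Set.Icc (0:ℝ) 1)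
    (hmbound : (m:ℝ) ≥ 2 * Real.log ((n:ℝ) / δ) / ε^2) :
    haveI : Nonempty (Fin n) := Fin.pos_iff_nonempty.mp hn
    -- score of forecaster i on outcome vector ω
    (let F : Fin n → (Fin m → Bool) → ℝ :=
      fun i ω => ∑ t, (1 - ((if ω t then (1:ℝ) else 0) - p i t)^2);
    -- accuracy of forecaster i
    let a : Fin n → ℝ := fun i => 1 - (1 / (m:ℝ)) * ∑ t, (p i t - θ t)^2;
    -- probability weight of outcome vector ω
    let w : (Fin m → Bool) → ℝ := fun ω => ∏ t, (if ω t then θ t else 1 - θ t);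
    -- with probability ≥ 1 - δ, every score-maximizing forecaster is ε-optimal
    ∑ ω ∈ {ω : Fin m → Bool | ∀ j, (∀ k, F k ω ≤ F j ω) →
        a j ≥ (Finset.univ.sup' Finset.univ_nonempty a) - ε}.toFinset, w ω
      ≥ 1 - δ) := by
  haveI : Nonempty (Fin n) := Fin.pos_iff_nonempty.mp hn
  intro F a w
  have hmR : (0:ℝ) < m := by exact_mod_cast hm
  -- weights are nonnegative and sum to 1
  have hw_nonneg : ∀ ω, 0 ≤ w ω := by
    intro ω
    apply Finset.prod_nonneg
    intro t _
    rcases hθ t with ⟨h0, h1⟩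
    split <;> linarith
  have hw_total : ∑ ω : (Fin m → Bool), w ω = 1 := by
    have h := sum_prod_pi_bool (fun t b => if b then θ t else 1 - θ t)
    simp only [if_true, if_false] at h
    calc ∑ ω : (Fin m → Bool), w ω
        = ∏ t, (θ t + (1 - θ t)) := h
      _ = 1 := by simp
  -- the maximizer of accuracy
  set M : ℝ := Finset.univ.sup' Finset.univ_nonempty a with hM
  obtain ⟨i0, _, hi0⟩ := Finset.exists_mem_eq_sup' (Finset.univ_nonempty) a
  -- sum of squared errors in terms of accuracy
  have hS : ∀ i, ∑ t, (p i t - θ t)^2 = (m:ℝ) * (1 - a i) := by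
    intro i
    have : a i = 1 - (1 / (m:ℝ)) * ∑ t, (p i t - θ t)^2 := rfl
    rw [this]
    field_simp
    ring
  -- per-forecaster Chernoff bound
  set Bj : Fin n → Finset (Fin m → Bool) :=
    fun j => if a j < M - ε then Finset.univ.filter (fun ω => F i0 ω ≤ F j ω) else ∅ with hBj
  have chernoff : ∀ j, ∑ ω ∈ Bj j, w ω ≤ Real.exp (-(m:ℝ) * ε^2 / 2) := by
    intro j
    by_cases hj : a j < M - ε
    · rw [hBj]
      simp only [if_pos hj]
      -- step 1: insert exp factor
      set g : Fin m → Bool → ℝ := fun t b =>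
        (if b then θ t else 1 - θ t) *
          Real.exp (ε * (((if b then (1:ℝ) else 0) - p i0 t)^2 - ((if b then (1:ℝ) else 0) - p j t)^2)) with hg
      have hg_nonneg : ∀ t b, 0 ≤ g t b := by
        intro t b
        apply mul_nonneg _ (Real.exp_pos _).le
        rcases hθ t with ⟨h0, h1⟩
        split <;> linarith
      have hfac : ∀ ω, w ω * Real.exp (ε * (F j ω - F i0 ω)) = ∏ t, g t (ω t) := by
        intro ω
        have hdiff : F j ω - F i0 ω
            = ∑ t, (((if ω t then (1:ℝ) else 0) - p i0 t)^2 - ((if ω t then (1:ℝ) else 0) - p j t)^2) := by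
          simp only [F]
          rw [← Finset.sum_sub_distrib]
          apply Finset.sum_congr rfl
          intro t _
          ring
        rw [hdiff, Finset.mul_sum, Real.exp_sum, ← Finset.prod_mul_distrib]
      have step1 : ∑ ω ∈ Finset.univ.filter (fun ω => F i0 ω ≤ F j ω), w ω
          ≤ ∑ ω : (Fin m → Bool), ∏ t, g t (ω t) := by
        have s1 : ∑ ω ∈ Finset.univ.filter (fun ω => F i0 ω ≤ F j ω), w ω
            ≤ ∑ ω ∈ Finset.univ.filter (fun ω => F i0 ω ≤ F j ω), w ω * Real.exp (ε * (F j ω - F i0 ω)) := by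
          apply Finset.sum_le_sum
          intro ω hω
          rw [Finset.mem_filter] at hω
          have h1 : (1:ℝ) ≤ Real.exp (ε * (F j ω - F i0 ω)) := by
            rw [← Real.exp_zero]
            apply Real.exp_le_exp.mpr
            have := hω.2
            nlinarith [hε.le]
          nlinarith [hw_nonneg ω]
        refine s1.trans ?_
        have s2 : ∑ ω ∈ Finset.univ.filter (fun ω => F i0 ω ≤ F j ω), w ω * Real.exp (ε * (F j ω - F i0 ω))
            ≤ ∑ ω : (Fin m → Bool), w ω * Real.exp (ε * (F j ω - F i0 ω)) := by
          apply Finset.sum_le_sum_of_subset_of_nonneg (Finset.filter_subset _ _)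
          intro ω _ _
          exact mul_nonneg (hw_nonneg ω) (Real.exp_pos _).le
        refine s2.trans ?_
        apply le_of_eq
        exact Finset.sum_congr rfl fun ω _ => hfac ω
      -- step 2: factorize and bound coordinatewise
      have step2 : ∑ ω : (Fin m → Bool), ∏ t, g t (ω t)
          ≤ Real.exp (ε * ((m:ℝ) * (a j - a i0)) + (m:ℝ) * ε^2 / 2) := by
        rw [sum_prod_pi_bool g]
        have bound : ∀ t, g t true + g t false
            ≤ Real.exp (ε * ((θ t - p i0 t)^2 - (θ t - p j t)^2) + ε^2/2) := by
          intro t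
          rcases hθ t with ⟨h0, h1⟩
          rcases hp i0 t with ⟨hq0, hq1⟩
          rcases hp j t with ⟨hr0, hr1⟩
          have := coord_mgf (θ t) (p i0 t) (p j t) ε h0 h1 hq0 hq1 hr0 hr1
          simp only [hg, if_true, if_false]
          calc θ t * Real.exp (ε * ((1 - p i0 t)^2 - (1 - p j t)^2))
                + (1 - θ t) * Real.exp (ε * ((0 - p i0 t)^2 - (0 - p j t)^2))
              = (1 - θ t) * Real.exp (ε * ((p i0 t)^2 - (p j t)^2))
                + θ t * Real.exp (ε * ((1 - p i0 t)^2 - (1 - p j t)^2)) := by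
                ring_nf
            _ ≤ _ := this
        calc ∏ t, (g t true + g t false)
            ≤ ∏ t, Real.exp (ε * ((θ t - p i0 t)^2 - (θ t - p j t)^2) + ε^2/2) := by
              apply Finset.prod_le_prod
              · intro t _
                have := hg_nonneg t true
                have := hg_nonneg t false
                linarith
              · intro t _; exact bound t
          _ = Real.exp (∑ t, (ε * ((θ t - p i0 t)^2 - (θ t - p j t)^2) + ε^2/2)) := by
              rw [Real.exp_sum]
          _ = Real.exp (ε * ((m:ℝ) * (a j - a i0)) + (m:ℝ) * ε^2 / 2) := by
              congr 1
              rw [Finset.sum_add_distrib, ← Finset.mul_sum, Finset.sum_sub_distrib]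
              have e1 : ∑ t, (θ t - p i0 t)^2 = (m:ℝ) * (1 - a i0) := by
                rw [← hS i0]; exact Finset.sum_congr rfl fun t _ => by ring
              have e2 : ∑ t, (θ t - p j t)^2 = (m:ℝ) * (1 - a j) := by
                rw [← hS j]; exact Finset.sum_congr rfl fun t _ => by ring
              rw [e1, e2]
              simp [Finset.sum_const, Finset.card_univ]
              ring
      refine (step1.trans step2).trans ?_
      apply Real.exp_le_exp.mpr
      have haj : a j - a i0 < -ε := by
        have : M = a i0 := hi0
        rw [this] at hj
        linarith
      exact arith1 (m:ℝ) ε (a j - a i0) hmR hε haj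
    · rw [hBj]
      simp only [if_neg hj]
      simp only [Finset.sum_empty]
      positivity
  -- the bad set is covered by the Bj
  set G : Finset (Fin m → Bool) := {ω : Fin m → Bool | ∀ j, (∀ k, F k ω ≤ F j ω) →
        a j ≥ M - ε}.toFinset with hG
  have hcover : Finset.univ \ G ⊆ Finset.univ.biUnion Bj := by
    intro ω hω
    rw [Finset.mem_sdiff] at hω
    have hnG : ω ∉ G := hω.2
    have hnG' : ¬ (∀ j, (∀ k, F k ω ≤ F j ω) → a j ≥ M - ε) := by
      intro hcon
      exact hnG (by rw [hG, Set.mem_toFinset]; exact hcon)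
    push_neg at hnG'
    obtain ⟨j, hFj, hja⟩ := hnG'
    rw [Finset.mem_biUnion]
    refine ⟨j, Finset.mem_univ j, ?_⟩
    rw [hBj]
    simp only [if_pos (by linarith : a j < M - ε)]
    rw [Finset.mem_filter]
    exact ⟨Finset.mem_univ ω, hFj i0⟩
  -- union bound
  have hbad : ∑ ω ∈ Finset.univ \ G, w ω ≤ (n:ℝ) * Real.exp (-(m:ℝ) * ε^2 / 2) := by
    calc ∑ ω ∈ Finset.univ \ G, w ω
        ≤ ∑ ω ∈ Finset.univ.biUnion Bj, w ω :=
          Finset.sum_le_sum_of_subset_of_nonneg hcover (fun ω _ _ => hw_nonneg ω)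
      _ ≤ ∑ j : Fin n, ∑ ω ∈ Bj j, w ω := sum_biUnion_le_sum _ _ _ hw_nonneg
      _ ≤ ∑ j : Fin n, Real.exp (-(m:ℝ) * ε^2 / 2) := Finset.sum_le_sum fun j _ => chernoff j
      _ = (n:ℝ) * Real.exp (-(m:ℝ) * ε^2 / 2) := by
          rw [Finset.sum_const, Finset.card_univ]; simp [nsmul_eq_mul]
  -- final arithmetic
  have hnR : (0:ℝ) < n := by exact_mod_cast hn
  have harith : (n:ℝ) * Real.exp (-(m:ℝ) * ε^2 / 2) ≤ δ := by
    have hlog : Real.log ((n:ℝ)/δ) ≤ (m:ℝ) * ε^2 / 2 := by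
      have h2 : 2 * Real.log ((n:ℝ) / δ) ≤ (m:ℝ) * ε^2 := by
        have := hmbound
        rw [ge_iff_le, div_le_iff₀ (by positivity : (0:ℝ) < ε^2)] at this
        linarith
      linarith
    have hexp : Real.exp (-(m:ℝ) * ε^2/2) ≤ δ / n := by
      have : Real.exp (-(m:ℝ) * ε^2/2) ≤ Real.exp (-Real.log ((n:ℝ)/δ)) := by
        apply Real.exp_le_exp.mpr; linarith
      refine this.trans ?_
      rw [Real.exp_neg, Real.exp_log (by positivity)]
      rw [inv_div]
    calc (n:ℝ) * Real.exp (-(m:ℝ) * ε^2 / 2) ≤ (n:ℝ) * (δ / n) := by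
          apply mul_le_mul_of_nonneg_left hexp hnR.le
      _ = δ := by field_simp
  -- conclude
  have hsplit : ∑ ω ∈ G, w ω = 1 - ∑ ω ∈ Finset.univ \ G, w ω := by
    have := Finset.sum_sdiff_eq_sub (Finset.subset_univ G) (f := w)
    rw [hw_total] at this
    linarith
  rw [hsplit]
  linarith
end

section
/- For C(x) = log Σ_{j=1}^n exp(x_j), the function x ↦ log(∂²_i C(x)) is 3-Lipschitz with respect to the ℓ∞ norm: |log(∂²_i C(x)/∂²_i C(x'))| ≤ 3·||x - x'||_∞. -/
/-!
Write `p = e^{x_i} / Σ_j e^{x_j}`; then `∂²_i C(x) = p (1 - p) = σ(s) σ(-s)`, where `σ` is the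
logistic sigmoid and `s = x_i - log Σ_{j ≠ i} e^{x_j}` is the log-odds of `p`. Log-sum-exp is
1-Lipschitz for the sup norm, so `s` is 2-Lipschitz. Finally `s ↦ log (σ(s) σ(-s))` is 1-Lipschitz:
it is the sum of the increasing `log σ(s)` and the decreasing `log σ(-s)`, whose difference is `s`.
-/

/-- C(x) = log Σ exp(x_j). -/
noncomputable def logSumExp (n : ℕ) (x : Fin n → ℝ) : ℝ :=
  Real.log (∑ j, Real.exp (x j))

/-- The i-th second partial derivative of C:
∂²_i C(x) = e^{x_i}·(Σ_{j≠i} e^{x_j})/(Σ_j e^{x_j})². -/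
noncomputable def d2C (n : ℕ) (i : Fin n) (x : Fin n → ℝ) : ℝ :=
  Real.exp (x i) * (∑ j ∈ Finset.univ.erase i, Real.exp (x j))
    / (∑ j, Real.exp (x j))^2

namespace Real

lemma log_sigmoid_neg (s : ℝ) : log (sigmoid (-s)) = log (sigmoid s) - s := by
  rw [← sigmoid_mul_rexp_neg, log_mul (sigmoid_pos s).ne' (exp_pos _).ne', log_exp, sub_eq_add_neg]

lemma abs_log_sigmoid_mul_sigmoid_neg_sub_le (s s' : ℝ) :
    |log (sigmoid s * sigmoid (-s)) - log (sigmoid s' * sigmoid (-s'))| ≤ |s - s'| := by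
  wlog h : s' ≤ s generalizing s s'
  · rw [abs_sub_comm, abs_sub_comm s]
    exact this s' s (le_of_not_ge h)
  have hpos : ∀ r, 0 < sigmoid r := sigmoid_pos
  simp only [log_mul (hpos _).ne' (hpos _).ne']
  have hmono : log (sigmoid s') ≤ log (sigmoid s) :=
    log_le_log (hpos _) (sigmoid_le h)
  have hanti : log (sigmoid (-s)) ≤ log (sigmoid (-s')) :=
    log_le_log (hpos _) (sigmoid_le (neg_le_neg h))
  rw [log_sigmoid_neg, log_sigmoid_neg] at hanti ⊢
  rw [abs_of_nonneg (sub_nonneg.2 h), abs_le]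
  constructor <;> linarith

end Real

open Real

lemma abs_log_sum_exp_sub_le {ι : Type*} {s : Finset ι} (hs : s.Nonempty) {x y : ι → ℝ} {t : ℝ}
    (hxy : ∀ j ∈ s, |x j - y j| ≤ t) :
    |log (∑ j ∈ s, exp (x j)) - log (∑ j ∈ s, exp (y j))| ≤ t := by
  have key : ∀ x y : ι → ℝ, (∀ j ∈ s, x j ≤ y j + t) →
      log (∑ j ∈ s, exp (x j)) ≤ t + log (∑ j ∈ s, exp (y j)) := by
    intro x y h
    have hy : 0 < ∑ j ∈ s, exp (y j) := Finset.sum_pos (fun j _ => exp_pos _) hs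
    calc log (∑ j ∈ s, exp (x j))
        ≤ log (exp t * ∑ j ∈ s, exp (y j)) := by
          refine log_le_log (Finset.sum_pos (fun j _ => exp_pos _) hs) ?_
          rw [Finset.mul_sum]
          exact Finset.sum_le_sum fun j hj => by
            rw [← exp_add]; exact exp_le_exp.2 (by linarith [h j hj])
      _ = t + log (∑ j ∈ s, exp (y j)) := by rw [log_mul (exp_pos _).ne' hy.ne', log_exp]
  rw [abs_sub_le_iff]
  constructor
  · linarith [key x y fun j hj => by linarith [(abs_le.1 (hxy j hj)).2]]
  · linarith [key y x fun j hj => by linarith [(abs_le.1 (hxy j hj)).1]]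

noncomputable def logOdds (n : ℕ) (i : Fin n) (x : Fin n → ℝ) : ℝ :=
  x i - log (∑ j ∈ Finset.univ.erase i, exp (x j))

lemma univ_erase_nonempty {n : ℕ} (hn : 2 ≤ n) (i : Fin n) : (Finset.univ.erase i).Nonempty :=
  have := Fin.nontrivial_iff_two_le.2 hn
  Finset.univ_nontrivial.erase_nonempty

lemma d2C_eq_sigmoid_mul_sigmoid_neg {n : ℕ} (hn : 2 ≤ n) (i : Fin n) (x : Fin n → ℝ) :
    d2C n i x = sigmoid (logOdds n i x) * sigmoid (-logOdds n i x) := by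
  set a := exp (x i)
  set b := ∑ j ∈ Finset.univ.erase i, exp (x j)
  have hb : 0 < b := Finset.sum_pos (fun j _ => exp_pos _) (univ_erase_nonempty hn i)
  have ha : 0 < a := exp_pos _
  have hsum : ∑ j, exp (x j) = a + b := (Finset.add_sum_erase _ _ (Finset.mem_univ i)).symm
  rw [d2C, hsum, logOdds, sigmoid_def, sigmoid_def, neg_neg, neg_sub, exp_sub, exp_sub, exp_log hb]
  field_simp
  ring

lemma abs_logOdds_sub_le {n : ℕ} (hn : 2 ≤ n) (i : Fin n) (x x' : Fin n → ℝ) :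
    |logOdds n i x - logOdds n i x'| ≤ 2 * ‖x - x'‖ := by
  have hcoord : ∀ j, |x j - x' j| ≤ ‖x - x'‖ := fun j => norm_le_pi_norm (x - x') j
  have hlse := abs_log_sum_exp_sub_le (univ_erase_nonempty hn i) fun j _ => hcoord j
  have hsplit : logOdds n i x - logOdds n i x' = (x i - x' i)
      - (log (∑ j ∈ Finset.univ.erase i, exp (x j))
        - log (∑ j ∈ Finset.univ.erase i, exp (x' j))) := by
    unfold logOdds; ring
  rw [hsplit]
  linarith [abs_sub (x i - x' i) (log (∑ j ∈ Finset.univ.erase i, exp (x j))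
    - log (∑ j ∈ Finset.univ.erase i, exp (x' j))), hcoord i]

/-- x ↦ log(∂²_i C(x)) is 3-Lipschitz in the ℓ∞ norm. -/
theorem log_d2C_lipschitz (n : ℕ) (hn : 2 ≤ n) (i : Fin n) (x x' : Fin n → ℝ) :
    |Real.log (d2C n i x / d2C n i x')| ≤ 3 * ‖x - x'‖ := by
  have hpos : ∀ s, sigmoid s * sigmoid (-s) ≠ 0 := fun s =>
    (mul_pos (sigmoid_pos s) (sigmoid_pos (-s))).ne'
  simp only [d2C_eq_sigmoid_mul_sigmoid_neg hn]
  rw [log_div (hpos _) (hpos _)]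
  calc _ ≤ |logOdds n i x - logOdds n i x'| := abs_log_sigmoid_mul_sigmoid_neg_sub_le _ _
    _ ≤ 2 * ‖x - x'‖ := abs_logOdds_sub_le hn i x x'
    _ ≤ 3 * ‖x - x'‖ := by linarith [norm_nonneg (x - x')]
end

section
/- For any c ∈ (0, 1/8), the largest root x_c of f_c(x) = 1 + x(log c - log x + 1) - c satisfies x_c > 4c. -/
/-- For c ∈ (0,1/8), the largest root x_c of f_c(x) = 1 + x(log c - log x + 1) - c
satisfies x_c > 4 * c. -/
theorem largest_root_gt_four_c (c x_c : ℝ) (hc0 : 0 < c) (hc : c < 1/8)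
    (hroot : 1 + x_c * (Real.log c - Real.log x_c + 1) - c = 0)
    (hgt : x_c > c)
    (hlargest : ∀ x > 0, 1 + x * (Real.log c - Real.log x + 1) - c = 0 → x ≤ x_c) :
    x_c > 4 * c := by
  by_contra h
  push_neg at h
  have hx0 : 0 < x_c := lt_trans hc0 hgt
  have key : x_c * (Real.log x_c - Real.log c - 1) = 1 - c := by nlinarith [hroot]
  have h1c : (0:ℝ) < 1 - c := by linarith
  have hL : 0 < Real.log x_c - Real.log c - 1 := by
    by_contra hL
    push_neg at hL
    nlinarith [mul_nonpos_of_nonneg_of_nonpos (le_of_lt hx0) hL]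
  have hlog : Real.log x_c ≤ Real.log (4 * c) := Real.log_le_log hx0 h
  have hlog4 : Real.log (4 * c) = Real.log 4 + Real.log c := by
    rw [Real.log_mul (by norm_num) (ne_of_gt hc0)]
  have h4 : Real.log 4 < 1.39 := by
    have h2 : Real.log 4 = 2 * Real.log 2 := by
      rw [show (4:ℝ) = 2^2 by norm_num, Real.log_pow]; push_cast; ring
    nlinarith [Real.log_two_lt_d9]
  have hLle : Real.log x_c - Real.log c - 1 < 0.39 := by
    rw [hlog4] at hlog; linarith
  nlinarith [mul_lt_mul_of_pos_left hLle hx0, mul_le_mul_of_nonneg_right h (le_of_lt hL)]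
end

section
/- If m samples are drawn uniformly and independently from a set of d elements, with m ≥ 32d·ln(1/(εδ)) for 0 < ε, δ < 1/2, then with probability at least 1-δ, at least (1-ε)d of the elements each receive at least m/(2d) samples. -/
open Classical

lemma sum_half_pow_cnt (d m : ℕ) (hd : 1 ≤ d) (i : Fin d) :
    ∑ s : Fin m → Fin d, (1/(d:ℝ))^m *
      (1/2:ℝ)^((Finset.univ.filter (fun t : Fin m => s t = i)).card)
      = (1 - 1/(2*(d:ℝ)))^m := by
  have hD : (0:ℝ) < d := by exact_mod_cast hd
  have key : ∀ s : Fin m → Fin d,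
      (1/(d:ℝ))^m * (1/2:ℝ)^((Finset.univ.filter (fun t : Fin m => s t = i)).card)
        = ∏ t : Fin m, ((1/(d:ℝ)) * if s t = i then (1/2:ℝ) else 1) := by
    intro s
    rw [Finset.prod_mul_distrib, Finset.prod_const, Finset.card_univ, Fintype.card_fin]
    congr 1
    rw [Finset.prod_ite, Finset.prod_const, Finset.prod_const, one_pow, mul_one]
  simp_rw [key]
  rw [← Fintype.sum_pow (fun y : Fin d => (1/(d:ℝ)) * if y = i then (1/2:ℝ) else 1) m]
  congr 1
  rw [← Finset.mul_sum]
  have h2 : ∑ x : Fin d, (if x = i then (1/2:ℝ) else 1) = (d:ℝ) - 1/2 := by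
    have h3 : ∀ x : Fin d, (if x = i then (1/2:ℝ) else 1)
        = 1 - (if x = i then (1/2:ℝ) else 0) := by
      intro x; by_cases h : x = i <;> simp [h] <;> norm_num
    simp_rw [h3]
    rw [Finset.sum_sub_distrib, Finset.sum_const, Finset.card_univ, Fintype.card_fin,
      Finset.sum_ite_eq' Finset.univ i (fun _ => (1/2:ℝ))]
    simp
  rw [h2]
  field_simp

lemma total_mass (d m : ℕ) (hd : 1 ≤ d) :
    ∑ _s : Fin m → Fin d, (1/(d:ℝ))^m = 1 := by
  have hD : (0:ℝ) < d := by exact_mod_cast hd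
  rw [Finset.sum_const, Finset.card_univ]
  simp [Fintype.card_fun]
  exact mul_inv_cancel₀ (by positivity)

lemma numeric_bound (d m : ℕ) (hd : 1 ≤ d) (ε δ : ℝ) (hε0 : 0 < ε) (hε : ε < 1/2)
    (hδ0 : 0 < δ) (hδ : δ < 1/2)
    (hm : (m:ℝ) ≥ 32 * d * Real.log (1 / (ε * δ))) :
    (1/ε) * (2:ℝ)^((m:ℝ)/(2*(d:ℝ))) * (1 - 1/(2*(d:ℝ)))^m ≤ δ := by
  have hD : (1:ℝ) ≤ d := by exact_mod_cast hd
  have hD0 : (0:ℝ) < d := by linarith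
  set k : ℝ := (m:ℝ)/(2*(d:ℝ)) with hkdef
  set L : ℝ := Real.log (1 / (ε * δ)) with hLdef
  have hL0 : 0 ≤ L := Real.log_nonneg (by
    rw [le_div_iff₀ (by positivity)]; nlinarith)
  have hk16 : 16 * L ≤ k := by
    rw [hkdef, le_div_iff₀ (by positivity)]
    nlinarith
  have hlog2 : Real.log 2 < 0.6931471808 := Real.log_two_lt_d9
  have hlog2pos : 0 < Real.log 2 := Real.log_pos (by norm_num)
  -- exponent inequality
  have hexp : k * Real.log 2 - k - Real.log ε ≤ Real.log δ := by
    have hL : L = -(Real.log ε + Real.log δ) := by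
      rw [hLdef, one_div, Real.log_inv, Real.log_mul (ne_of_gt hε0) (ne_of_gt hδ0)]
    nlinarith [hk16, hL0, hlog2]
  -- pieces
  have h1 : (0:ℝ) ≤ 1 - 1/(2*(d:ℝ)) := by
    have : 1/(2*(d:ℝ)) ≤ 1/2 := by
      apply div_le_div_of_nonneg_left (by norm_num) (by norm_num) (by linarith)
    linarith
  have h2 : (1 - 1/(2*(d:ℝ)))^m ≤ Real.exp (-k) := by
    have hstep : 1 - 1/(2*(d:ℝ)) ≤ Real.exp (-(1/(2*(d:ℝ)))) := by
      have := Real.add_one_le_exp (-(1/(2*(d:ℝ))))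
      linarith
    calc (1 - 1/(2*(d:ℝ)))^m ≤ (Real.exp (-(1/(2*(d:ℝ)))))^m :=
          pow_le_pow_left₀ h1 hstep m
      _ = Real.exp (-k) := by
          rw [← Real.exp_nat_mul, hkdef]; ring_nf
  have h3 : (2:ℝ)^k = Real.exp (k * Real.log 2) := by
    rw [Real.rpow_def_of_pos (by norm_num)]; ring_nf
  have h4 : (1/ε) = Real.exp (-(Real.log ε)) := by
    rw [Real.exp_neg, Real.exp_log hε0, one_div]
  calc (1/ε) * (2:ℝ)^k * (1 - 1/(2*(d:ℝ)))^m
      ≤ (1/ε) * (2:ℝ)^k * Real.exp (-k) := by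
        apply mul_le_mul_of_nonneg_left h2 (by positivity)
    _ = Real.exp (-(Real.log ε) + k * Real.log 2 + -k) := by
        rw [h3, h4, ← Real.exp_add, ← Real.exp_add]
    _ ≤ Real.exp (Real.log δ) := by
        apply Real.exp_le_exp.mpr; linarith
    _ = δ := Real.exp_log hδ0



lemma indicator_bound (k : ℝ) (c : ℕ) (hc : ¬ (k ≤ (c:ℝ))) :
    (1:ℝ) ≤ (2:ℝ)^k * (1/2:ℝ)^c := by
  have hck : (c:ℝ) ≤ k := le_of_lt (lt_of_not_ge hc)
  have h12 : (1/2:ℝ)^k ≤ (1/2:ℝ)^((c:ℝ)) :=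
    Real.rpow_le_rpow_of_exponent_ge (by norm_num) (by norm_num) hck
  have hpow : ((1/2:ℝ))^((c:ℝ)) = (1/2:ℝ)^c := Real.rpow_natCast _ c
  have h2k : (0:ℝ) < (2:ℝ)^k := Real.rpow_pos_of_pos (by norm_num) k
  have key : (2:ℝ)^k * (1/2:ℝ)^k = 1 := by
    rw [← Real.mul_rpow (by norm_num) (by norm_num)]
    norm_num
  calc (1:ℝ) = (2:ℝ)^k * (1/2:ℝ)^k := key.symm
    _ ≤ (2:ℝ)^k * (1/2:ℝ)^((c:ℝ)) := mul_le_mul_of_nonneg_left h12 (le_of_lt h2k)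
    _ = (2:ℝ)^k * (1/2:ℝ)^c := by rw [hpow]

open Classical in
/-- If m ≥ 32d·ln(1/(εδ)) i.i.d. uniform samples are drawn from d elements
(the joint distribution being uniform over s : Fin m → Fin d), then with
probability at least 1 - δ, at least (1-ε)d of the elements each receive
at least m/(2d) samples. -/
theorem uniform_samples_coverage (d m : ℕ) (hd : 1 ≤ d)
    (ε δ : ℝ) (hε0 : 0 < ε) (hε : ε < 1/2) (hδ0 : 0 < δ) (hδ : δ < 1/2)
    (hm : (m:ℝ) ≥ 32 * d * Real.log (1 / (ε * δ))) :
    ∑ s ∈ {s : Fin m → Fin d |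
        (((Finset.univ.filter (fun i : Fin d =>
          (m:ℝ) / (2 * d) ≤ ((Finset.univ.filter (fun t : Fin m => s t = i)).card : ℝ))).card : ℝ)
          ≥ (1 - ε) * d)}.toFinset,
      (1 / (d:ℝ))^m
    ≥ 1 - δ := by
  classical
  have hD : (0:ℝ) < d := by exact_mod_cast hd
  rw [Set.toFinset_setOf]
  set k : ℝ := (m:ℝ) / (2 * (d:ℝ)) with hkdef
  set P : (Fin m → Fin d) → Prop := fun s =>
    (((Finset.univ.filter (fun i : Fin d =>
        k ≤ ((Finset.univ.filter (fun t : Fin m => s t = i)).card : ℝ))).card : ℝ)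
      ≥ (1 - ε) * d) with hPdef
  have hsplit := Finset.sum_filter_add_sum_filter_not Finset.univ P
    (fun _ => (1/(d:ℝ))^m)
  rw [total_mass d m hd] at hsplit
  -- suffices: complement sum ≤ δ
  have hcompl : ∑ s ∈ Finset.univ.filter (fun s => ¬ P s), (1/(d:ℝ))^m ≤ δ := by
    -- bad count
    set bad : (Fin m → Fin d) → ℕ := fun s =>
      (Finset.univ.filter (fun i : Fin d =>
        ¬ (k ≤ ((Finset.univ.filter (fun t : Fin m => s t = i)).card : ℝ)))).card with hbaddef
    -- step A: on the complement, 1 ≤ bad/(ε d)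
    have hA : ∀ s, ¬ P s → (1:ℝ) ≤ (bad s : ℝ) / (ε * d) := by
      intro s hs
      have hcard := Finset.card_filter_add_card_filter_not
        (s := (Finset.univ : Finset (Fin d)))
        (p := fun i : Fin d =>
          k ≤ ((Finset.univ.filter (fun t : Fin m => s t = i)).card : ℝ))
      rw [Finset.card_univ, Fintype.card_fin] at hcard
      have hgood : (((Finset.univ.filter (fun i : Fin d =>
          k ≤ ((Finset.univ.filter (fun t : Fin m => s t = i)).card : ℝ))).card : ℝ))
          < (1 - ε) * d := lt_of_not_ge hs
      have hbadge : ε * d ≤ (bad s : ℝ) := by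
        have : ((Finset.univ.filter (fun i : Fin d =>
            k ≤ ((Finset.univ.filter (fun t : Fin m => s t = i)).card : ℝ))).card : ℝ)
            + (bad s : ℝ) = d := by
          rw [hbaddef]; exact_mod_cast congrArg (Nat.cast : ℕ → ℝ) hcard
        nlinarith
      rw [le_div_iff₀ (by positivity)]
      linarith
    -- step B
    have hB : ∑ s ∈ Finset.univ.filter (fun s => ¬ P s), (1/(d:ℝ))^m
        ≤ (1/(ε*d)) * ∑ s : Fin m → Fin d, (1/(d:ℝ))^m * (bad s : ℝ) := by
      rw [Finset.mul_sum]
      calc ∑ s ∈ Finset.univ.filter (fun s => ¬ P s), (1/(d:ℝ))^m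
          ≤ ∑ s ∈ Finset.univ.filter (fun s => ¬ P s),
              (1/(ε*d)) * ((1/(d:ℝ))^m * (bad s : ℝ)) := by
            apply Finset.sum_le_sum
            intro s hs
            have hns : ¬ P s := (Finset.mem_filter.mp hs).2
            have h1 := hA s hns
            have hpm : (0:ℝ) ≤ (1/(d:ℝ))^m := by positivity
            rw [le_div_iff₀ (by positivity)] at h1
            calc (1/(d:ℝ))^m = (1/(ε*d)) * ((1/(d:ℝ))^m * (ε * d)) := by
                  field_simp
              _ ≤ (1/(ε*d)) * ((1/(d:ℝ))^m * (bad s : ℝ)) := by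
                  apply mul_le_mul_of_nonneg_left _ (by positivity)
                  apply mul_le_mul_of_nonneg_left _ hpm
                  linarith
        _ ≤ ∑ s : Fin m → Fin d, (1/(ε*d)) * ((1/(d:ℝ))^m * (bad s : ℝ)) := by
            apply Finset.sum_le_sum_of_subset_of_nonneg (Finset.filter_subset _ _)
            intro s _ _
            positivity
    -- step C+D: bound the expectation of bad
    have hCD : ∑ s : Fin m → Fin d, (1/(d:ℝ))^m * (bad s : ℝ)
        ≤ (d:ℝ) * ((2:ℝ)^k * (1 - 1/(2*(d:ℝ)))^m) := by
      have hbadsum : ∀ s : Fin m → Fin d, (bad s : ℝ) =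
          ∑ i : Fin d, (if ¬ (k ≤ ((Finset.univ.filter
            (fun t : Fin m => s t = i)).card : ℝ)) then (1:ℝ) else 0) := by
        intro s
        show ((Finset.univ.filter (fun i : Fin d =>
          ¬ (k ≤ ((Finset.univ.filter (fun t : Fin m => s t = i)).card : ℝ)))).card : ℝ) = _
        rw [Finset.card_filter]
        push_cast
        rfl
      calc ∑ s : Fin m → Fin d, (1/(d:ℝ))^m * (bad s : ℝ)
          = ∑ i : Fin d, ∑ s : Fin m → Fin d, (1/(d:ℝ))^m *
              (if ¬ (k ≤ ((Finset.univ.filter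
                (fun t : Fin m => s t = i)).card : ℝ)) then (1:ℝ) else 0) := by
            simp_rw [hbadsum, Finset.mul_sum]
            rw [Finset.sum_comm]
        _ ≤ ∑ i : Fin d, (2:ℝ)^k * ((1 - 1/(2*(d:ℝ)))^m) := by
            apply Finset.sum_le_sum
            intro i _
            calc ∑ s : Fin m → Fin d, (1/(d:ℝ))^m *
                  (if ¬ (k ≤ ((Finset.univ.filter
                    (fun t : Fin m => s t = i)).card : ℝ)) then (1:ℝ) else 0)
                ≤ ∑ s : Fin m → Fin d, (2:ℝ)^k * ((1/(d:ℝ))^m *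
                    (1/2:ℝ)^((Finset.univ.filter (fun t : Fin m => s t = i)).card)) := by
                  apply Finset.sum_le_sum
                  intro s _
                  by_cases hc : k ≤ ((Finset.univ.filter
                      (fun t : Fin m => s t = i)).card : ℝ)
                  · rw [if_neg (not_not_intro hc), mul_zero]
                    positivity
                  · rw [if_pos hc, mul_one]
                    have := indicator_bound k _ hc
                    have hpm : (0:ℝ) ≤ (1/(d:ℝ))^m := by positivity
                    calc (1/(d:ℝ))^m = (1/(d:ℝ))^m * 1 := by ring
                      _ ≤ (1/(d:ℝ))^m * ((2:ℝ)^k *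
                          (1/2:ℝ)^((Finset.univ.filter (fun t : Fin m => s t = i)).card)) :=
                          mul_le_mul_of_nonneg_left this hpm
                      _ = (2:ℝ)^k * ((1/(d:ℝ))^m *
                          (1/2:ℝ)^((Finset.univ.filter (fun t : Fin m => s t = i)).card)) := by
                          ring
              _ = (2:ℝ)^k * ((1 - 1/(2*(d:ℝ)))^m) := by
                  rw [← Finset.mul_sum, sum_half_pow_cnt d m hd i]
        _ = (d:ℝ) * ((2:ℝ)^k * (1 - 1/(2*(d:ℝ)))^m) := by
            rw [Finset.sum_const, Finset.card_univ, Fintype.card_fin, nsmul_eq_mul]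
    have hnum := numeric_bound d m hd ε δ hε0 hε hδ0 hδ hm
    calc ∑ s ∈ Finset.univ.filter (fun s => ¬ P s), (1/(d:ℝ))^m
        ≤ (1/(ε*d)) * ∑ s : Fin m → Fin d, (1/(d:ℝ))^m * (bad s : ℝ) := hB
      _ ≤ (1/(ε*d)) * ((d:ℝ) * ((2:ℝ)^k * (1 - 1/(2*(d:ℝ)))^m)) := by
          apply mul_le_mul_of_nonneg_left hCD (by positivity)
      _ = (1/ε) * (2:ℝ)^k * (1 - 1/(2*(d:ℝ)))^m := by
          field_simp
      _ ≤ δ := hnum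
  linarith
end

section
/- Let a > 0 with |log a| ≤ βη ≤ 1, and for p ∈ (0,1] define r* = p/((1-p)a + p). Then |log r* - log p| ≤ βη and |r* - p| ≤ βη + (βη)². -/
lemma exp_le_one_add_add_sq {x : ℝ} (hx0 : 0 ≤ x) (hx1 : x ≤ 1) :
    Real.exp x ≤ 1 + x + x ^ 2 := by
  have h := Real.exp_bound (x := x) (by rw [abs_of_nonneg hx0]; exact hx1) (n := 2) (by norm_num)
  rw [Finset.sum_range_succ, Finset.sum_range_succ, Finset.sum_range_zero] at h
  have h2 : Real.exp x - (1 + x) ≤ |x| ^ 2 * (3 / 4) := by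
    have := abs_le.mp h
    simp only [pow_zero, pow_one] at this
    norm_num at this ⊢
    linarith [this.2]
  rw [abs_of_nonneg hx0] at h2
  nlinarith

/-- If |log a| ≤ βη ≤ 1 and r* = p/((1-p)a + p) for p ∈ (0,1], then
|log r* - log p| ≤ βη and |r* - p| ≤ βη + (βη)². -/
theorem optimal_report_close (a β η p : ℝ) (ha : 0 < a)
    (hβ : 0 < β) (hη : 0 < η)
    (hlog : |Real.log a| ≤ β * η) (hβη : β * η ≤ 1)
    (hp0 : 0 < p) (hp1 : p ≤ 1) :
    |Real.log (p / ((1 - p) * a + p)) - Real.log p| ≤ β * η ∧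
    |p / ((1 - p) * a + p) - p| ≤ β * η + (β * η)^2 := by
  set x := β * η with hxdef
  have hx0 : 0 < x := mul_pos hβ hη
  set D := (1 - p) * a + p with hDdef
  have hD : 0 < D := by
    have : 0 ≤ (1 - p) * a := mul_nonneg (by linarith) ha.le
    positivity
  -- D lies between a and 1
  have hDlb : min a 1 ≤ D := by
    rcases le_total a 1 with h | h
    · rw [min_eq_left h]; nlinarith
    · rw [min_eq_right h]; nlinarith
  have hDub : D ≤ max a 1 := by
    rcases le_total a 1 with h | h
    · rw [max_eq_right h]; nlinarith
    · rw [max_eq_left h]; nlinarith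
  have hlogD : |Real.log D| ≤ |Real.log a| := by
    rcases le_total a 1 with h | h
    · rw [min_eq_left h] at hDlb; rw [max_eq_right h] at hDub
      have h1 : Real.log D ≤ 0 := Real.log_nonpos hD.le hDub
      have h2 : Real.log a ≤ Real.log D := Real.log_le_log ha hDlb
      rw [abs_of_nonpos h1, abs_of_nonpos (Real.log_nonpos ha.le h)]
      linarith
    · rw [min_eq_right h] at hDlb; rw [max_eq_left h] at hDub
      have h1 : 0 ≤ Real.log D := Real.log_nonneg hDlb
      have h2 : Real.log D ≤ Real.log a := Real.log_le_log hD hDub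
      rw [abs_of_nonneg h1, abs_of_nonneg (Real.log_nonneg h)]
      linarith
  have hlogDx : |Real.log D| ≤ x := hlogD.trans hlog
  constructor
  · rw [Real.log_div hp0.ne' hD.ne']
    simpa [abs_sub_comm] using hlogDx
  · -- exp bound
    have hexp : Real.exp x - 1 ≤ x + x ^ 2 := by
      have := exp_le_one_add_add_sq hx0.le hβη
      linarith
    rcases le_total 1 D with h | h
    · -- p/D ≤ p
      have hle : p / D ≤ p := by
        rw [div_le_iff₀ hD]; nlinarith
      have hD' : D ≤ Real.exp x := by
        calc D = Real.exp (Real.log D) := (Real.exp_log hD).symm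
        _ ≤ Real.exp x := Real.exp_le_exp.mpr ((le_abs_self _).trans hlogDx)
      rw [abs_of_nonpos (by linarith)]
      have hfrac : p - p / D ≤ 1 - 1 / D := by
        have h1 : p - p / D = (p * D - p) / D := by field_simp
        have h2 : 1 - 1 / D = (D - 1) / D := by field_simp
        rw [h1, h2, div_le_div_iff₀ hD hD]
        nlinarith [mul_nonneg (sub_nonneg.mpr h) (sub_nonneg.mpr hp1)]
      have : 1 - 1 / D ≤ x + x ^ 2 := by
        have h1D : (0:ℝ) < 1 / D := by positivity
        have : 1 - 1 / D = (D - 1) / D := by field_simp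
        rw [this]
        have : (D - 1) / D ≤ D - 1 := by
          rw [div_le_iff₀ hD]; nlinarith
        have hD1 : D - 1 ≤ Real.exp x - 1 := by linarith
        linarith
      linarith
    · -- p ≤ p/D
      have hge : p ≤ p / D := by
        rw [le_div_iff₀ hD]; nlinarith
      rw [abs_of_nonneg (by linarith)]
      have hinv : 1 / D ≤ Real.exp x := by
        have : 1 / D = Real.exp (- Real.log D) := by
          rw [Real.exp_neg, Real.exp_log hD]; ring
        rw [this]
        exact Real.exp_le_exp.mpr ((neg_le_abs _).trans hlogDx)
      have hfrac : p / D - p ≤ 1 / D - 1 := by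
        rw [div_sub' hD.ne', div_sub' hD.ne']
        rw [div_le_div_iff₀ hD hD]
        nlinarith [mul_nonneg (sub_nonneg.mpr h) (sub_nonneg.mpr hp1)]
      linarith
end
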